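/- arXiv:2308.04609 — 2 statements merged into one kernel-verified Lean document; each statement's English description precedes it below -/
import Mathlib

section
/- There exists a 6-point pseudo 4-metric space (X′, d′) such that (X′, d′) ∈ C_{4,|·|}^1 but (X′, d′) ∉ V_4^m for every integer m ≥ 1. Concretely, one may take X′ = {x_1,…,x_5, a} and d′ : (X′)^4 → ℝ defined by d′(y_1,y_2,y_3,y_4) = 1 if y_1, y_2, y_3, y_4 are all distinct and one of them equals a, and d′(y_1,y_2,y_3,y_4) = 0 otherwise: this (X′, d′) is a 1-dimensional coboundary 4-metric, yet there is no m and no map g : X′ → ℝ^m with d′(y_1,…,y_4) = vol_3(g(y_1),…,g(y_4)) for all y_1,…,y_4 ∈ X′. -/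
open scoped BigOperators

/-- An alternating real-valued function on `j`-tuples of `X`
(a `(j-1)`-dimensional chain on the complete complex on `X`). -/
def AltChain {X : Type*} {j : ℕ} (α : (Fin j → X) → ℝ) : Prop :=
  ∀ (π : Equiv.Perm (Fin j)) (x : Fin j → X),
    α (x ∘ π) = ((Equiv.Perm.sign π : ℤ) : ℝ) * α x

/-- The boundary operator: `(∂α)(y₁,…,y_j) = ∑_{x ∈ X} α(x, y₁, …, y_j)`. -/
noncomputable def bdry {X : Type*} [Fintype X] {j : ℕ}
    (α : (Fin (j + 1) → X) → ℝ) : (Fin j → X) → ℝ :=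
  fun y => ∑ x : X, α (Fin.cons x y)

/-- The elementary chain `1_t`: value `sign π` on the reordering of `t` by `π`,
and `0` on all other tuples. -/
noncomputable def unitChain {X : Type*} [DecidableEq X] {j : ℕ} (t : Fin j → X) :
    (Fin j → X) → ℝ :=
  fun s => ∑ π : Equiv.Perm (Fin j),
    if s = t ∘ π then ((Equiv.Perm.sign π : ℤ) : ℝ) else 0

/-- The coboundary operator:
`(δf)(x₁,…,x_{j+2}) = ∑ᵢ (-1)^(i+1) f(x₁,…,x̂ᵢ,…,x_{j+2})` (`0`-indexed sign `(-1)^i`). -/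
noncomputable def cobdry {X : Type*} {j : ℕ}
    (f : (Fin (j + 1) → X) → ℝ) : (Fin (j + 2) → X) → ℝ :=
  fun x => ∑ i : Fin (j + 2), (-1 : ℝ) ^ (i : ℕ) * f (x ∘ i.succAbove)

/-- A pseudo metric of arity `K` (a pseudo `K`-metric): nonnegative, vanishing on
non-injective tuples, permutation invariant, satisfying the simplex inequality. -/
structure IsPseudoMetric {X : Type*} (K : ℕ) (d : (Fin K → X) → ℝ) : Prop where
  nonneg : ∀ x, 0 ≤ d x
  eq_zero : ∀ x, ¬ Function.Injective x → d x = 0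
  perm : ∀ (π : Equiv.Perm (Fin K)) (x), d (x ∘ π) = d x
  simplex : ∀ (x : Fin K → X) (y : X),
    d x ≤ ∑ i : Fin K, d (Function.update x i y)

/-- A strong pseudo metric of arity `k + 1` (a strong pseudo `(k+1)`-metric).
The strong simplex inequality `d t ≤ ∑_τ |α(τ)| * d(τ)` (with the sum over
`(k+1)`-element subsets `τ` of `X`, each evaluated on any fixed ordering of `τ`)
is stated in the equivalent form `(k+1)! * d t ≤ ∑_s |α(s)| * d(s)` with the sum
over all `(k+1)`-tuples `s`: since `α` is alternating and `d` is permutation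
invariant, the summand depends only on the underlying set of `s` (it vanishes on
tuples with repeated entries), and each `(k+1)`-element subset has exactly
`(k+1)!` orderings. -/
structure IsStrongPseudoMetric {X : Type*} [Fintype X] [DecidableEq X] (k : ℕ)
    (d : (Fin (k + 1) → X) → ℝ) : Prop where
  nonneg : ∀ x, 0 ≤ d x
  eq_zero : ∀ x, ¬ Function.Injective x → d x = 0
  perm : ∀ (π : Equiv.Perm (Fin (k + 1))) (x), d (x ∘ π) = d x
  strong_simplex : ∀ t : Fin (k + 1) → X, Function.Injective t →
    ∀ α : (Fin (k + 1) → X) → ℝ, AltChain α → bdry α = bdry (unitChain t) →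
      ((k + 1).factorial : ℝ) * d t ≤ ∑ s : Fin (k + 1) → X, |α s| * d s

/-- `(X, d)` is a coboundary metric of arity `k + 2` in `m` dimensions with respect
to the norm `ν` on `ℝ^m`: there are chains `f 1, …, f m` on `(k+1)`-tuples (i.e.
`(k+2)-2`-dimensional chains for arity `k+2`) whose simultaneous coboundary
realizes `d` on injective tuples, and `d` vanishes on non-injective tuples. -/
def IsCoboundaryMetric {X : Type*} (k m : ℕ) (ν : (Fin m → ℝ) → ℝ)
    (d : (Fin (k + 2) → X) → ℝ) : Prop :=
  ∃ f : Fin m → ((Fin (k + 1) → X) → ℝ),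
    (∀ i, AltChain (f i)) ∧
    (∀ x, Function.Injective x → d x = ν (fun i => cobdry (f i) x)) ∧
    (∀ x, ¬ Function.Injective x → d x = 0)

/-- `ν` is a norm on `ℝ^m`. -/
structure IsNorm {m : ℕ} (ν : (Fin m → ℝ) → ℝ) : Prop where
  nonneg : ∀ x, 0 ≤ ν x
  eq_zero_iff : ∀ x, ν x = 0 ↔ x = 0
  homog : ∀ (c : ℝ) (x), ν (c • x) = |c| * ν x
  triangle : ∀ x y, ν (x + y) ≤ ν x + ν y

/-- The `ℓ_p` norm on `ℝ^m` for real `p`. -/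
noncomputable def lpNorm (p : ℝ) {m : ℕ} (x : Fin m → ℝ) : ℝ :=
  (∑ i, |x i| ^ p) ^ (1 / p)

/-- The `ℓ_1` norm on `ℝ^m`. -/
noncomputable def l1Norm {m : ℕ} (x : Fin m → ℝ) : ℝ := ∑ i, |x i|

/-- The `ℓ_2` (Euclidean) norm on `ℝ^m`. -/
noncomputable def l2Norm {m : ℕ} (x : Fin m → ℝ) : ℝ := Real.sqrt (∑ i, x i ^ 2)

/-- The `ℓ_∞` norm on `ℝ^m` (the sup norm, which is the norm of `Fin m → ℝ`). -/
noncomputable def linfNorm {m : ℕ} (x : Fin m → ℝ) : ℝ := ‖x‖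

/- The apex extension of `d` (of arity `K`), with the apex being
`none : Option X` (a new element not in `X`): on an injective `(K+1)`-tuple
containing the apex in position `i` it is `d` of the tuple with position `i`
removed, and it is `0` on all other tuples. -/
open Classical in
noncomputable def apexExt {X : Type*} {K : ℕ} (d : (Fin K → X) → ℝ) :
    (Fin (K + 1) → Option X) → ℝ := fun x =>
  if h : Function.Injective x ∧ ∃ i, x i = none then
    d (fun j =>
      Option.get (x ((Classical.choose h.2).succAbove j))
        (by
          rw [Option.isSome_iff_ne_none]
          intro hnone
          exact Fin.succAbove_ne (Classical.choose h.2) j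
            (h.1 (hnone.trans (Classical.choose_spec h.2).symm))))
  else 0

/-- The `K`-dimensional volume of the simplex with vertices `y 0, …, y K` in `ℝ^m`:
`(1/K!) * √(det (AᵀA))` where `A` is the `m × K` matrix with columns
`y i - y 0`, `i = 1, …, K`. -/
noncomputable def simplexVolume {m K : ℕ} (y : Fin (K + 1) → (Fin m → ℝ)) : ℝ :=
  (1 / (K.factorial : ℝ)) *
    Real.sqrt
      (Matrix.det
        (Matrix.of fun i j : Fin K =>
          ∑ l : Fin m, (y i.succ l - y 0 l) * (y j.succ l - y 0 l)))

open Classical in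
/-- The 4-pseudometric on the 6-point set `Fin 6` (with apex `a = 5`): value `1`
on quadruples of distinct points one of which is the apex, `0` otherwise. -/
noncomputable def dApexSix : (Fin 4 → Fin 6) → ℝ := fun y =>
  if Function.Injective y ∧ ∃ i, y i = 5 then 1 else 0

/-!
`dApexSix` is the apex indicator of the point `5`. It is a pseudo 4-metric: if an injective
quadruple contains the apex, replacing one of its points by `z` (at `z`'s own position if `z`
already occurs, at a position other than the apex's otherwise) leaves an injective quadruple
containing the apex. It is the absolute value of the coboundary of the 2-chain `e ∧ s`, where
`e` is the indicator of the apex and `s (b, c)` is the sign of `c - b`: up to sign,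
`δ(e ∧ s) = e ∧ δs`, and `|δs| = 1` on distinct triples.

It is not a volume metric. If `g` realised it, the flat tetrahedra would put `g 3` and `g 4` in
the plane of `g 0, g 1, g 2`, and since all tetrahedra with apex `g 5` have the same volume, all
triangles among `g 0, …, g 4` would have the same area. In the affine frame `(g 0; g 1, g 2)`
this puts `g 3` and `g 4` among the parallelogram completions `(1, 1), (1, -1), (-1, 1)`, and
no two of these (equal or not) span a triangle with `g 0` of that area.
-/

open Function

open Classical in
noncomputable def apexIndicator {X : Type*} {K : ℕ} (a : X) : (Fin K → X) → ℝ := fun y =>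
  if Injective y ∧ ∃ i, y i = a then 1 else 0

lemma dApexSix_eq_apexIndicator : dApexSix = apexIndicator (5 : Fin 6) := by
  ext y
  unfold dApexSix apexIndicator
  congr

lemma injective_update_of_notMem_range {X : Type*} {K : ℕ} {y : Fin K → X} (hy : Injective y)
    {z : X} (hz : z ∉ Set.range y) (i : Fin K) : Injective (update y i z) := by
  simp only [Set.mem_range, not_exists] at hz
  intro j k hjk
  by_cases hj : j = i <;> by_cases hk : k = i <;> simp_all [update_of_ne, hy.eq_iff]

section ApexIndicator

variable {X : Type*} {K : ℕ} (a : X)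

lemma apexIndicator_nonneg (y : Fin K → X) : 0 ≤ apexIndicator a y := by
  unfold apexIndicator
  split_ifs <;> norm_num

lemma apexIndicator_of_injective_of_mem {y : Fin K → X} (hy : Injective y)
    (ha : ∃ i, y i = a) : apexIndicator a y = 1 :=
  if_pos ⟨hy, ha⟩

lemma apexIndicator_of_not_injective {y : Fin K → X} (hy : ¬Injective y) :
    apexIndicator a y = 0 :=
  if_neg fun h => hy h.1

lemma apexIndicator_of_forall_ne {y : Fin K → X} (ha : ∀ i, y i ≠ a) : apexIndicator a y = 0 :=
  if_neg fun h => ha _ h.2.choose_spec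

lemma apexIndicator_comp_perm (π : Equiv.Perm (Fin K)) (y : Fin K → X) :
    apexIndicator a (y ∘ π) = apexIndicator a y := by
  have h : (Injective (y ∘ π) ∧ ∃ i, (y ∘ π) i = a) ↔ (Injective y ∧ ∃ i, y i = a) :=
    and_congr (Injective.of_comp_iff' y π.bijective)
      (π.exists_congr_right (q := fun i => y i = a))
  unfold apexIndicator
  split_ifs <;> tauto

lemma apexIndicator_le_sum_update (hK : 1 < K) (y : Fin K → X) (z : X) :
    apexIndicator a y ≤ ∑ i, apexIndicator a (update y i z) := by
  by_cases h : Injective y ∧ ∃ i, y i = a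
  swap
  · rw [apexIndicator, if_neg h]
    exact Finset.sum_nonneg fun i _ => apexIndicator_nonneg a _
  obtain ⟨hy, i₀, hi₀⟩ := h
  obtain ⟨i, hi⟩ : ∃ i, apexIndicator a (update y i z) = 1 := by
    by_cases hz : z ∈ Set.range y
    · obtain ⟨j, rfl⟩ := hz
      refine ⟨j, ?_⟩
      rw [update_eq_self]
      exact apexIndicator_of_injective_of_mem a hy ⟨i₀, hi₀⟩
    · obtain ⟨i, hi⟩ := Fintype.exists_ne_of_one_lt_card (by simpa using hK) i₀
      exact ⟨i, apexIndicator_of_injective_of_mem a (injective_update_of_notMem_range hy hz i)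
        ⟨i₀, by rwa [update_of_ne hi.symm]⟩⟩
  rw [apexIndicator_of_injective_of_mem a hy ⟨i₀, hi₀⟩, ← hi]
  exact Finset.single_le_sum (f := fun i => apexIndicator a (update y i z))
    (fun j _ => apexIndicator_nonneg a _) (Finset.mem_univ i)

theorem isPseudoMetric_apexIndicator (hK : 1 < K) : IsPseudoMetric K (apexIndicator a) :=
  ⟨apexIndicator_nonneg a, fun _ => apexIndicator_of_not_injective a,
    apexIndicator_comp_perm a, apexIndicator_le_sum_update a hK⟩

end ApexIndicator

lemma altChain_of_swap {X : Type*} {j : ℕ} {α : (Fin j → X) → ℝ}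
    (h : ∀ i k, i ≠ k → ∀ x, α (x ∘ Equiv.swap i k) = -α x) : AltChain α := by
  intro π
  induction π using Equiv.Perm.swap_induction_on with
  | one => simp
  | swap_mul σ i k hik ih =>
    intro x
    rw [Equiv.Perm.coe_mul, ← comp_assoc, ih, h i k hik, Equiv.Perm.sign_mul,
      Equiv.Perm.sign_swap hik]
    push_cast
    ring

section OrderSign

variable {X : Type*} [LinearOrder X]

def orderSign (b c : X) : ℝ :=
  if b < c then 1 else if c < b then -1 else 0

lemma orderSign_swap (b c : X) : orderSign c b = -orderSign b c := by
  unfold orderSign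
  split_ifs <;> first | (norm_num; done) | order

lemma abs_orderSign_alternating_sum {b c d : X} (hbc : b ≠ c) (hbd : b ≠ d) (hcd : c ≠ d) :
    |orderSign c d - orderSign b d + orderSign b c| = 1 := by
  unfold orderSign
  split_ifs <;> first | (norm_num; done) | order

end OrderSign

section WedgeChain

variable {X : Type*} (e : X → ℝ) (s : X → X → ℝ)

def wedgeChain (y : Fin 3 → X) : ℝ :=
  e (y 0) * s (y 1) (y 2) - e (y 1) * s (y 0) (y 2) + e (y 2) * s (y 0) (y 1)

lemma altChain_wedgeChain (hs : ∀ b c, s c b = -s b c) : AltChain (wedgeChain e s) := by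
  refine altChain_of_swap fun i k hik x => ?_
  fin_cases i <;> fin_cases k <;> first
    | exact absurd rfl hik
    | (simp only [wedgeChain, comp_apply, Equiv.swap_apply_left, Equiv.swap_apply_right,
        Equiv.swap_apply_of_ne_of_ne, ne_eq, Fin.reduceEq, not_false_eq_true, Fin.isValue,
        Fin.zero_eta, Fin.mk_one, Fin.reduceFinMk, hs (x 0) (x 1), hs (x 0) (x 2), hs (x 1) (x 2)]
       ring)

lemma cobdry_wedgeChain (x : Fin 4 → X) :
    cobdry (wedgeChain e s) x =
      -e (x 0) * (s (x 2) (x 3) - s (x 1) (x 3) + s (x 1) (x 2))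
      + e (x 1) * (s (x 2) (x 3) - s (x 0) (x 3) + s (x 0) (x 2))
      - e (x 2) * (s (x 1) (x 3) - s (x 0) (x 3) + s (x 0) (x 1))
      + e (x 3) * (s (x 1) (x 2) - s (x 0) (x 2) + s (x 0) (x 1)) := by
  simp only [cobdry, Nat.reduceAdd, wedgeChain, Fin.sum_univ_four, comp_apply, Fin.succAbove,
    Fin.reduceCastSucc, Fin.reduceSucc, Fin.reduceLT, ↓reduceIte, Fin.isValue,
    Fin.coe_ofNat_eq_mod, Nat.reduceMod]
  ring

end WedgeChain

theorem isCoboundaryMetric_apexIndicator {X : Type*} [LinearOrder X] (a : X) :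
    IsCoboundaryMetric 2 1 (fun v => |v 0|) (apexIndicator (K := 4) a) := by
  refine ⟨fun _ => wedgeChain (fun z => if z = a then 1 else 0) orderSign,
    fun _ => altChain_wedgeChain _ _ orderSign_swap, fun x hx => ?_,
    fun _ => apexIndicator_of_not_injective a⟩
  change _ = |cobdry _ x|
  rw [cobdry_wedgeChain]
  by_cases ha : ∃ k, x k = a
  · obtain ⟨k, rfl⟩ := ha
    rw [apexIndicator_of_injective_of_mem _ hx ⟨k, rfl⟩]
    simp only [hx.eq_iff]
    fin_cases k <;>
      simp only [Fin.reduceFinMk, Fin.isValue, Fin.reduceEq, if_true, if_false, one_mul,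
        zero_mul, add_zero, zero_add, sub_zero, zero_sub, neg_mul, abs_neg, neg_zero] <;>
      refine (abs_orderSign_alternating_sum (X := X) ?_ ?_ ?_).symm <;> exact hx.ne (by decide)
  · push Not at ha
    simp [apexIndicator_of_forall_ne a ha, ha]

section Gram

open Matrix

lemma det_mul_transpose_eq_zero_iff {ι κ R : Type*} [Fintype ι] [DecidableEq ι] [Fintype κ]
    [Field R] [LinearOrder R] [IsStrictOrderedRing R] (B : Matrix ι κ R) :
    (B * Bᵀ).det = 0 ↔ ∃ c ≠ 0, c ᵥ* B = 0 := by
  rw [← exists_mulVec_eq_zero_iff]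
  have hker := ker_mulVecLin_transpose_mul_self Bᵀ
  rw [transpose_transpose] at hker
  refine exists_congr fun c => and_congr_right fun _ => ?_
  rw [← mulVec_transpose]
  simpa only [LinearMap.mem_ker, mulVecLin_apply] using SetLike.ext_iff.1 hker c

variable {m : ℕ}

noncomputable def gram3 (u v w : Fin m → ℝ) : ℝ :=
  (Matrix.of ![u, v, w] * (Matrix.of ![u, v, w])ᵀ).det

lemma gram3_nonneg (u v w : Fin m → ℝ) : 0 ≤ gram3 u v w := by
  have h := posSemidef_self_mul_conjTranspose (Matrix.of ![u, v, w])
  rw [conjTranspose_eq_transpose_of_trivial] at h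
  exact h.det_nonneg

lemma gram3_eq_zero_iff {u v w : Fin m → ℝ} :
    gram3 u v w = 0 ↔ ∃ c : Fin 3 → ℝ, c ≠ 0 ∧ c 0 • u + c 1 • v + c 2 • w = 0 := by
  rw [gram3, det_mul_transpose_eq_zero_iff]
  simp only [vecMul_eq_sum, Fin.sum_univ_three]
  rfl

lemma exists_eq_add_of_gram3_eq_zero {u v w z : Fin m → ℝ} (hw : gram3 u v w ≠ 0)
    (hz : gram3 u v z = 0) : ∃ x y : ℝ, z = x • u + y • v := by
  obtain ⟨c, hc, hcz⟩ := gram3_eq_zero_iff.1 hz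
  have hc2 : c 2 ≠ 0 := by
    intro h2
    refine hw (gram3_eq_zero_iff.2 ⟨c, hc, ?_⟩)
    simpa [h2] using hcz
  refine ⟨-c 0 / c 2, -c 1 / c 2, smul_right_injective _ hc2 ?_⟩
  simp only [smul_add, smul_smul, mul_div_cancel₀ _ hc2]
  linear_combination (norm := module) hcz

lemma gram3_eq_of_eq_add {u v w p q r : Fin m → ℝ} {a₁ b₁ a₂ b₂ a₃ b₃ : ℝ}
    (hp : p = a₁ • u + b₁ • v) (hq : q = a₂ • u + b₂ • v) (hr : r = a₃ • u + b₃ • v + w) :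
    gram3 p q r = (a₁ * b₂ - b₁ * a₂) ^ 2 * gram3 u v w := by
  have hB : Matrix.of ![p, q, r] =
      !![a₁, b₁, 0; a₂, b₂, 0; a₃, b₃, 1] * Matrix.of ![u, v, w] := by
    ext i l
    fin_cases i <;> simp [hp, hq, hr, Matrix.mul_apply, Fin.sum_univ_three, add_assoc]
  have hdet : det !![a₁, b₁, 0; a₂, b₂, 0; a₃, b₃, 1] = a₁ * b₂ - b₁ * a₂ := by
    simp [det_fin_three]
  rw [gram3, gram3, hB, transpose_mul, Matrix.mul_assoc, ← Matrix.mul_assoc (of ![u, v, w]),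
    det_mul, det_mul, det_transpose, hdet]
  ring

lemma gram3_eq_sq_simplexVolume (p : Fin 4 → Fin m → ℝ) :
    gram3 (p 1 - p 0) (p 2 - p 0) (p 3 - p 0) = (6 * simplexVolume p) ^ 2 := by
  have hmat : (Matrix.of fun i j : Fin 3 => ∑ l, (p i.succ l - p 0 l) * (p j.succ l - p 0 l)) =
      Matrix.of ![p 1 - p 0, p 2 - p 0, p 3 - p 0] *
        (Matrix.of ![p 1 - p 0, p 2 - p 0, p 3 - p 0])ᵀ := by
    ext i j
    fin_cases i <;> fin_cases j <;> simp [Matrix.mul_apply]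
  rw [simplexVolume, hmat, ← gram3, mul_pow, mul_pow, Real.sq_sqrt (gram3_nonneg _ _ _),
    ← mul_assoc]
  norm_num [Nat.factorial]

end Gram

/-- `(x₃, y₃)` and `(x₄, y₄)` are coordinates of two further points in the affine frame
`(P 0; P 1, P 2)`; each hypothesis says that a triangle spanned by the five points has the
same area as `P 0 P 1 P 2`. -/
lemma false_of_sq_dets_eq_one {x₃ y₃ x₄ y₄ : ℝ} (h₁ : y₃ ^ 2 = 1) (h₂ : x₃ ^ 2 = 1)
    (h₃ : (1 - x₃ - y₃) ^ 2 = 1) (h₄ : y₄ ^ 2 = 1) (h₅ : x₄ ^ 2 = 1)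
    (h₆ : (1 - x₄ - y₄) ^ 2 = 1) (h₇ : (x₃ * y₄ - y₃ * x₄) ^ 2 = 1) : False := by
  rcases sq_eq_one_iff.1 h₁ with rfl | rfl <;> rcases sq_eq_one_iff.1 h₂ with rfl | rfl <;>
    rcases sq_eq_one_iff.1 h₄ with rfl | rfl <;> rcases sq_eq_one_iff.1 h₅ with rfl | rfl <;>
    norm_num at *

theorem false_of_equal_cone_grams {m : ℕ} {V : ℝ} (hV : V ≠ 0) (P : Fin 5 → Fin m → ℝ)
    (c : Fin m → ℝ)
    (hcone : ∀ i j k, i < j → j < k → gram3 (P j - P i) (P k - P i) (c - P i) = V)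
    (hflat : ∀ i j k l, i < j → j < k → k < l →
      gram3 (P j - P i) (P k - P i) (P l - P i) = 0) :
    False := by
  set u := P 1 - P 0
  set v := P 2 - P 0
  have h012 : gram3 u v (c - P 0) = V := hcone 0 1 2 (by decide) (by decide)
  have area_sq (i j k : Fin 5) (hij : i < j) (hjk : j < k) (a₁ b₁ a₂ b₂ a₃ b₃ : ℝ)
      (hp : P j - P i = a₁ • u + b₁ • v) (hq : P k - P i = a₂ • u + b₂ • v)
      (hr : c - P i = a₃ • u + b₃ • v + (c - P 0)) :
      (a₁ * b₂ - b₁ * a₂) ^ 2 = 1 := by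
    have h := hcone i j k hij hjk
    rw [gram3_eq_of_eq_add hp hq hr, h012] at h
    exact (mul_eq_right₀ hV).1 h
  obtain ⟨x₃, y₃, h₃⟩ := exists_eq_add_of_gram3_eq_zero (h012 ▸ hV)
    (hflat 0 1 2 3 (by decide) (by decide) (by decide))
  obtain ⟨x₄, y₄, h₄⟩ := exists_eq_add_of_gram3_eq_zero (h012 ▸ hV)
    (hflat 0 1 2 4 (by decide) (by decide) (by decide))
  have hu : P 1 - P 0 = (1 : ℝ) • u + (0 : ℝ) • v := by module
  have hv : P 2 - P 0 = (0 : ℝ) • u + (1 : ℝ) • v := by module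
  have hvu : P 2 - P 1 = (-1 : ℝ) • u + (1 : ℝ) • v := by module
  have hc₀ : c - P 0 = (0 : ℝ) • u + (0 : ℝ) • v + (c - P 0) := by module
  have hc₁ : c - P 1 = (-1 : ℝ) • u + (0 : ℝ) • v + (c - P 0) := by module
  have h₃₁ : P 3 - P 1 = (x₃ - 1) • u + y₃ • v := by linear_combination (norm := module) h₃
  have h₄₁ : P 4 - P 1 = (x₄ - 1) • u + y₄ • v := by linear_combination (norm := module) h₄
  refine false_of_sq_dets_eq_one (x₃ := x₃) (y₃ := y₃) (x₄ := x₄) (y₄ := y₄) ?_ ?_ ?_ ?_ ?_ ?_ ?_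
  · linear_combination area_sq 0 1 3 (by decide) (by decide) _ _ _ _ _ _ hu h₃ hc₀
  · linear_combination area_sq 0 2 3 (by decide) (by decide) _ _ _ _ _ _ hv h₃ hc₀
  · linear_combination area_sq 1 2 3 (by decide) (by decide) _ _ _ _ _ _ hvu h₃₁ hc₁
  · linear_combination area_sq 0 1 4 (by decide) (by decide) _ _ _ _ _ _ hu h₄ hc₀
  · linear_combination area_sq 0 2 4 (by decide) (by decide) _ _ _ _ _ _ hv h₄ hc₀
  · linear_combination area_sq 1 2 4 (by decide) (by decide) _ _ _ _ _ _ hvu h₄₁ hc₁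
  · linear_combination area_sq 0 3 4 (by decide) (by decide) _ _ _ _ _ _ h₃ h₄ hc₀

/-- `(Fin 6, dApexSix)` is a 6-point pseudo 4-metric space lying in
`C_{4,|·|}^1` (a 1-dimensional coboundary 4-metric) that is not an
`m`-dimensional volume 4-metric for any `m ≥ 1`. -/
theorem stmt_18 :
    IsPseudoMetric 4 dApexSix ∧
      IsCoboundaryMetric 2 1 (fun v => |v 0|) dApexSix ∧
        ∀ m : ℕ, 1 ≤ m →
          ¬ ∃ g : Fin 6 → (Fin m → ℝ),
              ∀ y : Fin 4 → Fin 6,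
                dApexSix y = simplexVolume (m := m) (K := 3) fun i => g (y i) := by
  rw [dApexSix_eq_apexIndicator]
  refine ⟨isPseudoMetric_apexIndicator 5 (by norm_num), isCoboundaryMetric_apexIndicator 5, ?_⟩
  rintro m - ⟨g, hg⟩
  have hgram (y : Fin 4 → Fin 6) :
      gram3 (g (y 1) - g (y 0)) (g (y 2) - g (y 0)) (g (y 3) - g (y 0)) =
        36 * apexIndicator 5 y ^ 2 := by
    rw [hg y, gram3_eq_sq_simplexVolume (fun i => g (y i))]
    ring
  refine false_of_equal_cone_grams (V := 36) (by norm_num) (fun i => g i.castSucc) (g 5)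
    (fun i j k hij hjk => ?_) (fun i j k l _ _ _ => ?_)
  · have hinj : ∀ i j k : Fin 5, i < j → j < k →
        Injective ![i.castSucc, j.castSucc, k.castSucc, (5 : Fin 6)] := by decide
    have h := hgram ![i.castSucc, j.castSucc, k.castSucc, 5]
    rw [apexIndicator_of_injective_of_mem (5 : Fin 6) (hinj i j k hij hjk) ⟨3, rfl⟩] at h
    simpa using h
  · have hne : ∀ t, ![i.castSucc, j.castSucc, k.castSucc, l.castSucc] t ≠ (5 : Fin 6) := by
      intro t
      fin_cases t <;> exact (Fin.castSucc_lt_last _).ne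
    have h := hgram ![i.castSucc, j.castSucc, k.castSucc, l.castSucc]
    rw [apexIndicator_of_forall_ne _ hne] at h
    simpa using h
end

section
/- Let m ≥ 1 be an integer, let X ⊆ ℝ^m be a finite set with n := |X| ≥ 3, and suppose there exist real constants c_1, c_2 with 0 < c_1 ≤ c_2 such that c_1 ≤ vol_2(x, y, z) ≤ c_2 for every triple of distinct points x, y, z ∈ X. Then n ≤ ((16·c_2² + 1)/(2·c_1) + 1)^m; in particular m ≥ Ω(log n), i.e., m ≥ log n / log((16·c_2² + 1)/(2·c_1) + 1). -/
open scoped BigOperators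

/-- The area of the triangle with vertices `x, y, z ∈ ℝ^m`. -/
noncomputable def triangleArea {m : ℕ} (x y z : Fin m → ℝ) : ℝ :=
  simplexVolume (m := m) (K := 2) ![x, y, z]

/-!
Write `a₁ = 2c₁`, `a₂ = 2c₂` for the bounds on the parallelogram areas `|x ∧ y|`. Let `p, q` be
a diametral pair, `D = ‖q - p‖` and `e` the unit vector along `q - p`. Since
`|(q - p) ∧ (u - p)| ≤ a₂`, all points lie in the cylinder of radius `R = a₂ / D` around the
segment `[p, q]`. For distinct `u, v` and any third point `w`, splitting `v - u` along `e` and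
`eᗮ` gives `a₁ ≤ |(v - u) ∧ (w - u)| ≤ 2R |⟪e, v - u⟫| + D ‖(v - u)ᗮ‖`. After stretching the
axis by `2R` and `eᗮ` by `D`, the points are `a₁/√2`-separated inside a ball of radius `√2 a₂`,
and a volume-packing argument bounds their number by `(4a₂/a₁ + 1)^m = (4c₂/c₁ + 1)^m`.
-/

open RealInnerProductSpace Metric MeasureTheory Module

theorem Finset.exists_mem_ne_ne {α : Type*} {S : Finset α} (hS : 2 < S.card) (u v : α) :
    ∃ w ∈ S, w ≠ u ∧ w ≠ v := by
  classical
  by_contra! h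
  have hsub : S ⊆ {u, v} := fun w hw => by
    rw [Finset.mem_insert, Finset.mem_singleton]
    exact or_iff_not_imp_left.2 (h w hw)
  have := (Finset.card_le_card hsub).trans Finset.card_le_two
  omega

theorem card_le_of_separated_of_norm_sub_le {E ι : Type*} [NormedAddCommGroup E]
    [NormedSpace ℝ E] [FiniteDimensional ℝ E] (s : Finset ι) (f : ι → E) (c : E) {σ ρ : ℝ}
    (hσ : 0 < σ) (hρ : 0 ≤ ρ) (hsep : ∀ i ∈ s, ∀ j ∈ s, i ≠ j → σ ≤ ‖f i - f j‖)
    (hball : ∀ i ∈ s, ‖f i - c‖ ≤ ρ) :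
    (s.card : ℝ) ≤ (2 * ρ / σ + 1) ^ finrank ℝ E := by
  borelize E
  let μ : Measure E := Measure.addHaar
  have hdisj : (s : Set ι).PairwiseDisjoint fun i => ball (f i) (σ / 2) := fun i hi j hj hij =>
    ball_disjoint_ball (by rw [dist_eq_norm]; linarith [hsep i hi j hj hij])
  have hsub : ⋃ i ∈ s, ball (f i) (σ / 2) ⊆ ball c (ρ + σ / 2) :=
    Set.iUnion₂_subset fun i hi => ball_subset_ball' (by
      rw [dist_eq_norm]; linarith [hball i hi])
  have hvol : (s.card : ENNReal) * ENNReal.ofReal ((σ / 2) ^ finrank ℝ E) * μ (ball 0 1) ≤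
      ENNReal.ofReal ((ρ + σ / 2) ^ finrank ℝ E) * μ (ball 0 1) :=
    calc (s.card : ENNReal) * ENNReal.ofReal ((σ / 2) ^ finrank ℝ E) * μ (ball 0 1)
        = μ (⋃ i ∈ s, ball (f i) (σ / 2)) := by
          rw [measure_biUnion_finset hdisj fun i _ => measurableSet_ball]
          simp only [μ.addHaar_ball_of_pos _ (half_pos hσ), Finset.sum_const, nsmul_eq_mul,
            mul_assoc]
      _ ≤ μ (ball c (ρ + σ / 2)) := measure_mono hsub
      _ = ENNReal.ofReal ((ρ + σ / 2) ^ finrank ℝ E) * μ (ball 0 1) :=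
          μ.addHaar_ball_of_pos _ (by positivity)
  have hcard := (ENNReal.mul_le_mul_iff_left (measure_ball_pos μ _ one_pos).ne'
    measure_ball_lt_top.ne).1 hvol
  rw [← ENNReal.ofReal_natCast, ← ENNReal.ofReal_mul (by positivity),
    ENNReal.ofReal_le_ofReal_iff (by positivity)] at hcard
  rw [show 2 * ρ / σ + 1 = (ρ + σ / 2) / (σ / 2) by field_simp, div_pow,
    le_div_iff₀ (by positivity)]
  exact hcard

section InnerProductSpace

variable {E : Type*} [NormedAddCommGroup E] [InnerProductSpace ℝ E]

noncomputable def parallelogramArea (a b : E) : ℝ := √(‖a‖ ^ 2 * ‖b‖ ^ 2 - ⟪a, b⟫ ^ 2)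

theorem parallelogramArea_comm (a b : E) : parallelogramArea a b = parallelogramArea b a := by
  rw [parallelogramArea, parallelogramArea, real_inner_comm, mul_comm]

@[simp]
theorem parallelogramArea_zero_right (a : E) : parallelogramArea a 0 = 0 := by
  simp [parallelogramArea]

theorem parallelogramArea_le_norm_mul_norm (a b : E) : parallelogramArea a b ≤ ‖a‖ * ‖b‖ := by
  rw [parallelogramArea, ← Real.sqrt_sq (by positivity : 0 ≤ ‖a‖ * ‖b‖)]
  exact Real.sqrt_le_sqrt (by nlinarith [sq_nonneg ⟪a, b⟫])

theorem parallelogramArea_smul_left (r : ℝ) (a b : E) :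
    parallelogramArea (r • a) b = |r| * parallelogramArea a b := by
  rw [parallelogramArea, parallelogramArea, real_inner_smul_left, norm_smul, Real.norm_eq_abs,
    mul_pow, mul_pow, sq_abs, ← Real.sqrt_sq_eq_abs, ← Real.sqrt_mul (sq_nonneg r)]
  ring_nf

theorem parallelogramArea_smul_right (r : ℝ) (a b : E) :
    parallelogramArea a (r • b) = |r| * parallelogramArea a b := by
  rw [parallelogramArea_comm, parallelogramArea_smul_left, parallelogramArea_comm]

theorem parallelogramArea_of_norm_eq_one {e : E} (he : ‖e‖ = 1) (b : E) :
    parallelogramArea e b = ‖b - ⟪e, b⟫ • e‖ := by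
  rw [parallelogramArea, ← Real.sqrt_sq (norm_nonneg (b - ⟪e, b⟫ • e)), norm_sub_sq_real,
    real_inner_smul_right, norm_smul, Real.norm_eq_abs, he, real_inner_comm]
  congr 1
  rw [mul_pow, sq_abs]
  ring

theorem parallelogramArea_add_left_le (a₁ a₂ b : E) :
    parallelogramArea (a₁ + a₂) b ≤ parallelogramArea a₁ b + parallelogramArea a₂ b := by
  rcases eq_or_ne b 0 with rfl | hb
  · simp
  -- against `b = ‖b‖ • e` the area is `‖b‖` times the norm of the component orthogonal to `e`,
  -- which is additive
  set e := ‖b‖⁻¹ • b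
  have he : ‖e‖ = 1 := norm_smul_inv_norm hb
  have hbe : b = ‖b‖ • e := by rw [smul_inv_smul₀ (norm_ne_zero_iff.mpr hb)]
  rw [hbe]
  simp only [parallelogramArea_smul_right, parallelogramArea_comm _ e,
    parallelogramArea_of_norm_eq_one he, ← mul_add]
  gcongr
  rw [inner_add_right, add_smul]
  exact (norm_add_le _ _).trans_eq' (by congr 1; abel)

theorem parallelogramArea_le_of_norm_eq_one {e : E} (he : ‖e‖ = 1) (a b : E) :
    parallelogramArea a b ≤ |⟪e, a⟫| * ‖b - ⟪e, b⟫ • e‖ + ‖a - ⟪e, a⟫ • e‖ * ‖b‖ := by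
  calc parallelogramArea a b
      = parallelogramArea (⟪e, a⟫ • e + (a - ⟪e, a⟫ • e)) b := by rw [add_sub_cancel]
    _ ≤ parallelogramArea (⟪e, a⟫ • e) b + parallelogramArea (a - ⟪e, a⟫ • e) b :=
        parallelogramArea_add_left_le _ _ _
    _ ≤ _ := by
        rw [parallelogramArea_smul_left, parallelogramArea_of_norm_eq_one he]
        gcongr
        exact parallelogramArea_le_norm_mul_norm _ _

theorem abs_inner_sub_half_le {e p q u : E} {D : ℝ} (he : ‖e‖ = 1) (hqp : q - p = D • e)
    (hup : ‖u - p‖ ≤ D) (huq : ‖u - q‖ ≤ D) : |⟪e, u - p⟫ - D / 2| ≤ D / 2 := by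
  have h₁ : ⟪e, u - p⟫ ≤ ‖u - p‖ := by simpa [he] using real_inner_le_norm e (u - p)
  have h₂ : ⟪e, q - u⟫ ≤ ‖u - q‖ := by simpa [he, norm_sub_rev] using real_inner_le_norm e (q - u)
  have h₃ : ⟪e, q - u⟫ = D - ⟪e, u - p⟫ := by
    rw [show q - u = (q - p) - (u - p) by abel, inner_sub_right, hqp, real_inner_smul_right,
      real_inner_self_eq_norm_sq, he, one_pow, mul_one]
  rw [abs_le]
  constructor <;> linarith

variable [FiniteDimensional ℝ E]

theorem card_le_of_separated_in_cylinder {S : Finset E} {p e : E} (he : ‖e‖ = 1)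
    {D R a : ℝ} (hD : 0 ≤ D) (hR : 0 ≤ R) (ha : 0 < a)
    (hslab : ∀ u ∈ S, |⟪e, u - p⟫ - D / 2| ≤ D / 2)
    (hperp : ∀ u ∈ S, ‖u - p - ⟪e, u - p⟫ • e‖ ≤ R)
    (hsep : ∀ u ∈ S, ∀ v ∈ S, u ≠ v →
      a ≤ |⟪e, v - u⟫| * (2 * R) + ‖v - u - ⟪e, v - u⟫ • e‖ * D) :
    (S.card : ℝ) ≤ (4 * R * D / a + 1) ^ finrank ℝ E := by
  -- stretch the axis by `2R` and its orthogonal complement by `D`; the extra `√2` turns the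
  -- `ℓ¹`-type separation into a Euclidean one
  let L : E → E := fun x => √2 • ((2 * R * ⟪e, x⟫) • e + D • (x - ⟪e, x⟫ • e))
  have hL_sub (x y : E) : L x - L y = L (x - y) := by
    simp only [L, inner_sub_right]
    module
  have hL_norm (x : E) :
      ‖L x‖ ^ 2 = 2 * ((2 * R * ⟪e, x⟫) ^ 2 + (D * ‖x - ⟪e, x⟫ • e‖) ^ 2) := by
    have horth : ⟪(2 * R * ⟪e, x⟫) • e, D • (x - ⟪e, x⟫ • e)⟫ = 0 := by
      simp only [real_inner_smul_left, real_inner_smul_right, inner_sub_right,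
        real_inner_self_eq_norm_sq, he]
      ring
    rw [norm_smul, mul_pow, Real.norm_eq_abs, sq_abs, Real.sq_sqrt zero_le_two, sq (‖_ + _‖),
      norm_add_sq_eq_norm_sq_add_norm_sq_real horth, norm_smul, norm_smul, Real.norm_eq_abs,
      Real.norm_eq_abs, he, abs_of_nonneg hD]
    ring_nf
    rw [sq_abs]
    ring
  set c := p + (D / 2) • e
  have hc (u : E) : u - c - ⟪e, u - c⟫ • e = u - p - ⟪e, u - p⟫ • e := by
    simp only [c, inner_sub_right, inner_add_right, inner_smul_right, real_inner_self_eq_norm_sq,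
      he]
    module
  refine (card_le_of_separated_of_norm_sub_le S L (L c) (ρ := 2 * R * D) ha (by positivity)
    ?_ ?_).trans_eq (by ring_nf)
  · intro u hu v hv huv
    rw [hL_sub, ← pow_le_pow_iff_left₀ ha.le (norm_nonneg _) two_ne_zero, hL_norm]
    set X := |⟪e, u - v⟫| * (2 * R)
    set Y := ‖u - v - ⟪e, u - v⟫ • e‖ * D
    have hX : X ^ 2 = (2 * R * ⟪e, u - v⟫) ^ 2 := by rw [mul_pow, sq_abs]; ring
    calc a ^ 2 ≤ (X + Y) ^ 2 := pow_le_pow_left₀ ha.le (hsep v hv u hu huv.symm) 2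
      _ ≤ 2 * (X ^ 2 + Y ^ 2) := by nlinarith [sq_nonneg (X - Y)]
      _ = _ := by rw [hX]; ring
  · intro u hu
    rw [hL_sub, ← pow_le_pow_iff_left₀ (norm_nonneg _) (by positivity) two_ne_zero, hL_norm, hc]
    have ht : ⟪e, u - c⟫ = ⟪e, u - p⟫ - D / 2 := by
      simp only [c, inner_sub_right, inner_add_right, real_inner_smul_right,
        real_inner_self_eq_norm_sq, he]
      ring
    have h_axis : (2 * R * (⟪e, u - p⟫ - D / 2)) ^ 2 ≤ (R * D) ^ 2 := by
      rw [mul_pow, ← sq_abs (_ - _), show R * D = 2 * R * (D / 2) by ring, mul_pow (2 * R)]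
      gcongr
      exact hslab u hu
    have h_perp : (D * ‖u - p - ⟪e, u - p⟫ • e‖) ^ 2 ≤ (R * D) ^ 2 := by
      rw [mul_comm R]
      gcongr
      exact hperp u hu
    rw [ht]
    linarith

theorem card_le_of_parallelogramArea_bounds {S : Finset E} (hS : 3 ≤ S.card)
    {a₁ a₂ : ℝ} (ha₁ : 0 < a₁)
    (harea : ∀ u ∈ S, ∀ v ∈ S, ∀ w ∈ S, u ≠ v → u ≠ w → v ≠ w →
      a₁ ≤ parallelogramArea (v - u) (w - u) ∧ parallelogramArea (v - u) (w - u) ≤ a₂) :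
    (S.card : ℝ) ≤ (4 * a₂ / a₁ + 1) ^ finrank ℝ E := by
  have hne : S.Nonempty := Finset.card_pos.1 (by omega)
  obtain ⟨⟨q, p⟩, hqp_mem, hmax⟩ :=
    (S ×ˢ S).exists_max_image (fun x => ‖x.1 - x.2‖) (hne.product hne)
  obtain ⟨hq, hp⟩ := Finset.mem_product.1 hqp_mem
  set D := ‖q - p‖
  have hdiam : ∀ u ∈ S, ∀ v ∈ S, ‖u - v‖ ≤ D := fun u hu v hv =>
    hmax (u, v) (Finset.mem_product.2 ⟨hu, hv⟩)
  have hD : 0 < D := by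
    obtain ⟨x, hx, y, hy, hxy⟩ := Finset.one_lt_card.1 (by omega : 1 < S.card)
    exact (norm_pos_iff.2 (sub_ne_zero.2 hxy)).trans_le (hdiam x hx y hy)
  have ha₂ : 0 ≤ a₂ := by
    obtain ⟨x, hx, y, hy, z, hz, hxy, hxz, hyz⟩ := Finset.two_lt_card.1 (by omega : 2 < S.card)
    have := harea x hx y hy z hz hxy hxz hyz
    linarith [this.1, this.2]
  set e := D⁻¹ • (q - p)
  have he : ‖e‖ = 1 := norm_smul_inv_norm (norm_pos_iff.1 hD)
  have hqp : q - p = D • e := by rw [smul_inv_smul₀ hD.ne']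
  have hpq : p ≠ q := fun h => by simp [D, h] at hD
  have hperp : ∀ u ∈ S, D * ‖u - p - ⟪e, u - p⟫ • e‖ ≤ a₂ := by
    intro u hu
    by_cases hup : u = p
    · simpa [hup] using ha₂
    by_cases huq : u = q
    · simpa [huq, hqp, real_inner_smul_right, real_inner_self_eq_norm_sq, he] using ha₂
    have h := (harea p hp q hq u hu hpq (Ne.symm hup) (Ne.symm huq)).2
    rwa [hqp, parallelogramArea_smul_left, parallelogramArea_of_norm_eq_one he,
      abs_of_pos hD] at h
  refine (card_le_of_separated_in_cylinder he hD.le (R := a₂ / D) (by positivity) ha₁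
    (fun u hu => abs_inner_sub_half_le he hqp (hdiam u hu p hp) (hdiam u hu q hq))
    (fun u hu => by rw [le_div_iff₀ hD, mul_comm]; exact hperp u hu) ?_).trans_eq
    (by field_simp)
  intro u hu v hv huv
  obtain ⟨w, hw, hwu, hwv⟩ := Finset.exists_mem_ne_ne (by omega : 2 < S.card) u v
  have hwu_perp : ‖w - u - ⟪e, w - u⟫ • e‖ ≤ 2 * (a₂ / D) := by
    have : w - u - ⟪e, w - u⟫ • e =
        (w - p - ⟪e, w - p⟫ • e) - (u - p - ⟪e, u - p⟫ • e) := by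
      simp only [inner_sub_right]
      module
    rw [this, two_mul]
    refine (norm_sub_le _ _).trans (add_le_add ?_ ?_) <;>
      rw [le_div_iff₀ hD, mul_comm] <;> exact hperp _ ‹_›
  calc a₁ ≤ parallelogramArea (v - u) (w - u) := (harea u hu v hv w hw huv hwu.symm hwv.symm).1
    _ ≤ |⟪e, v - u⟫| * ‖w - u - ⟪e, w - u⟫ • e‖ + ‖v - u - ⟪e, v - u⟫ • e‖ * ‖w - u‖ :=
        parallelogramArea_le_of_norm_eq_one he _ _
    _ ≤ |⟪e, v - u⟫| * (2 * (a₂ / D)) + ‖v - u - ⟪e, v - u⟫ • e‖ * D := by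
        gcongr
        exact hdiam w hw u hu

end InnerProductSpace

theorem triangleArea_eq_parallelogramArea {m : ℕ} (x y z : Fin m → ℝ) :
    triangleArea x y z =
      parallelogramArea (WithLp.toLp 2 (y - x)) (WithLp.toLp 2 (z - x)) / 2 := by
  have hinner (a b : Fin m → ℝ) : ⟪WithLp.toLp 2 a, WithLp.toLp 2 b⟫ = ∑ l, a l * b l := by
    simp only [EuclideanSpace.inner_toLp_toLp, dotProduct, star_trivial, mul_comm]
  rw [triangleArea, simplexVolume, parallelogramArea, ← real_inner_self_eq_norm_sq,
    ← real_inner_self_eq_norm_sq, sq]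
  -- match the Gram matrix entry `⟪z - x, y - x⟫`
  nth_rw 4 [real_inner_comm]
  rw [hinner, hinner, hinner, hinner, Matrix.det_fin_two]
  simp only [Matrix.of_apply, Fin.succ_zero_eq_one, Fin.succ_one_eq_two, Matrix.cons_val_zero,
    Matrix.cons_val_one, Matrix.cons_val_two, Matrix.tail_cons, Matrix.head_cons, Pi.sub_apply,
    Nat.factorial_two]
  ring

theorem card_le_of_triangleArea_bounds {m : ℕ} {X : Finset (Fin m → ℝ)} (hn : 3 ≤ X.card)
    {c₁ c₂ : ℝ} (hc₁ : 0 < c₁)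
    (hvol : ∀ x ∈ X, ∀ y ∈ X, ∀ z ∈ X, x ≠ y → x ≠ z → y ≠ z →
      c₁ ≤ triangleArea x y z ∧ triangleArea x y z ≤ c₂) :
    (X.card : ℝ) ≤ (4 * c₂ / c₁ + 1) ^ m := by
  have hinj : Function.Injective (WithLp.toLp 2 : (Fin m → ℝ) → EuclideanSpace ℝ (Fin m)) :=
    WithLp.toLp_injective 2
  have h := card_le_of_parallelogramArea_bounds (S := X.image (WithLp.toLp 2))
    (a₁ := 2 * c₁) (a₂ := 2 * c₂) (by rwa [Finset.card_image_of_injective _ hinj])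
    (by positivity) ?_
  · rw [Finset.card_image_of_injective _ hinj, finrank_euclideanSpace_fin] at h
    convert h using 3
    field_simp
  simp only [Finset.mem_image]
  rintro _ ⟨x, hx, rfl⟩ _ ⟨y, hy, rfl⟩ _ ⟨z, hz, rfl⟩ hxy hxz hyz
  have h := hvol x hx y hy z hz (hinj.ne_iff.1 hxy) (hinj.ne_iff.1 hxz) (hinj.ne_iff.1 hyz)
  rw [triangleArea_eq_parallelogramArea, WithLp.toLp_sub, WithLp.toLp_sub] at h
  constructor <;> linarith [h.1, h.2]

theorem stmt_19_general (m : ℕ) (X : Finset (Fin m → ℝ)) (hn : 3 ≤ X.card)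
    (c₁ c₂ : ℝ) (hc₁ : 0 < c₁) (hc₁₂ : c₁ ≤ c₂)
    (hvol : ∀ x ∈ X, ∀ y ∈ X, ∀ z ∈ X, x ≠ y → x ≠ z → y ≠ z →
      c₁ ≤ triangleArea x y z ∧ triangleArea x y z ≤ c₂) :
    (X.card : ℝ) ≤ ((16 * c₂ ^ 2 + 1) / (2 * c₁) + 1) ^ m ∧
      Real.log (X.card) / Real.log ((16 * c₂ ^ 2 + 1) / (2 * c₁) + 1) ≤ (m : ℝ) := by
  have hc₂ : 0 < c₂ := hc₁.trans_le hc₁₂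
  have hbase : 4 * c₂ / c₁ ≤ (16 * c₂ ^ 2 + 1) / (2 * c₁) := by
    rw [div_le_div_iff₀ hc₁ (by positivity)]
    nlinarith [sq_nonneg (4 * c₂ - 1)]
  have hcard : (X.card : ℝ) ≤ ((16 * c₂ ^ 2 + 1) / (2 * c₁) + 1) ^ m :=
    (card_le_of_triangleArea_bounds hn hc₁ hvol).trans (by gcongr)
  refine ⟨hcard, ?_⟩
  have hB : 1 < (16 * c₂ ^ 2 + 1) / (2 * c₁) + 1 := lt_add_of_pos_left 1 (by positivity)
  rw [div_le_iff₀ (Real.log_pos hB), ← Real.log_pow]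
  exact Real.log_le_log (Nat.cast_pos.2 (by omega)) hcard

/-- if `X ⊆ ℝ^m` is finite with `n = |X| ≥ 3` and there are
constants `0 < c₁ ≤ c₂` with `c₁ ≤ vol₂(x, y, z) ≤ c₂` for all triples of
distinct points of `X`, then `n ≤ ((16 c₂² + 1)/(2 c₁) + 1)^m`; in particular
`m ≥ log n / log((16 c₂² + 1)/(2 c₁) + 1)`. -/
theorem stmt_19 (m : ℕ) (hm : 1 ≤ m) (X : Finset (Fin m → ℝ)) (hn : 3 ≤ X.card)
    (c₁ c₂ : ℝ) (hc₁ : 0 < c₁) (hc₁₂ : c₁ ≤ c₂)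
    (hvol : ∀ x ∈ X, ∀ y ∈ X, ∀ z ∈ X, x ≠ y → x ≠ z → y ≠ z →
      c₁ ≤ triangleArea x y z ∧ triangleArea x y z ≤ c₂) :
    (X.card : ℝ) ≤ ((16 * c₂ ^ 2 + 1) / (2 * c₁) + 1) ^ m ∧
      Real.log (X.card) / Real.log ((16 * c₂ ^ 2 + 1) / (2 * c₁) + 1) ≤ (m : ℝ) :=
  stmt_19_general m X hn c₁ c₂ hc₁ hc₁₂ hvol
end
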